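/- arXiv:0811.1574 — 2 statements merged into one kernel-verified Lean document; each statement's English description precedes it below -/
import Mathlib

section
/- Let S be a finite regular monoid and k a field whose characteristic does not divide the order of any maximal subgroup of S. Let M and N be simple right kS-modules having apexes at idempotents e and f of S, respectively. If Ext¹_{kS}(M, N) ≠ 0, then either SeS ⊊ SfS or SfS ⊊ SeS (the apexes are strictly comparable in the J-order). -/
/-!
`Ext¹(M, N)` vanishes as soon as every extension `0 → N → E → M → 0` splits, and, `M` and `N`
being simple, such an extension splits once some `x ∈ E` with `p x ≠ 0` generates a submodule
not containing `ι(N)`.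

If the apexes `e, f` are incomparable, take `x = x₀ e` with `p x₀ · e ≠ 0`: then `x · kS · f`
lies in `E · eSf`, and every `esf` annihilates `M` and `N`, hence (being regular) also `E`,
whereas `N f ≠ 0`.

If `SeS = SfS`, the elements of `eSe` outside the maximal subgroup `G_e` annihilate `M` and `N`,
hence `E`. Averaging a `k`-linear section of `p` over `G_e` (possible since `|G_e|` is invertible
in `k`) gives a `G_e`-equivariant section `σ`, and `x = σ m₀` with `m₀ e ≠ 0` works:
`x · kS · e ⊆ σ(M)`, which meets `ι(N)` trivially, whereas `N e ≠ 0`.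
-/

open CategoryTheory MulOpposite

universe u v

section Extensions

variable {R : Type u} [Ring R] {M N : Type v} [AddCommGroup M] [Module R M]
  [AddCommGroup N] [Module R N]

variable (R M N) in
def ExtensionsSplit : Prop :=
  ∀ (E : Type v) [AddCommGroup E] [Module R E] (ι : N →ₗ[R] E) (p : E →ₗ[R] M),
    Function.Injective ι → Function.Surjective p → Function.Exact ι p →
      ∃ r : E →ₗ[R] N, r ∘ₗ ι = LinearMap.id

theorem ExtensionsSplit.exists_comp_eq (hsplit : ExtensionsSplit R M N) {P₁ P₀ : Type v}
    [AddCommGroup P₁] [Module R P₁] [AddCommGroup P₀] [Module R P₀]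
    {d : P₁ →ₗ[R] P₀} {π : P₀ →ₗ[R] M} (hπ : Function.Surjective π) (hdπ : Function.Exact d π)
    {g : P₁ →ₗ[R] N} (hg : LinearMap.ker d ≤ LinearMap.ker g) :
    ∃ h : P₀ →ₗ[R] N, h ∘ₗ d = g := by
  -- the pushout of `d` along `g` is an extension of `M` by `N`
  let W := LinearMap.range (d.prod (-g))
  have hW : ∀ y, Submodule.Quotient.mk (p := W) (d y, 0) = Submodule.Quotient.mk (0, g y) :=
    fun y => (Submodule.Quotient.eq W).mpr ⟨y, by simp⟩
  let ι : N →ₗ[R] (P₀ × N) ⧸ W := W.mkQ ∘ₗ LinearMap.inr R P₀ N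
  let p : (P₀ × N) ⧸ W →ₗ[R] M := W.liftQ (π ∘ₗ LinearMap.fst R P₀ N) <| by
    rintro _ ⟨y, rfl⟩
    simpa using hdπ.apply_apply_eq_zero y
  have hι : Function.Injective ι := by
    rw [injective_iff_map_eq_zero]
    intro n hn
    obtain ⟨y, hy⟩ := (Submodule.Quotient.mk_eq_zero W).mp hn
    have hdy : d y = 0 := congrArg Prod.fst hy
    have hgy : -g y = n := congrArg Prod.snd hy
    rw [← hgy, hg hdy, neg_zero]
  have hp : Function.Surjective p := fun m => by
    obtain ⟨x, rfl⟩ := hπ m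
    exact ⟨W.mkQ (x, 0), rfl⟩
  have hιp : Function.Exact ι p := by
    intro z
    obtain ⟨⟨x, n⟩, rfl⟩ := W.mkQ_surjective z
    constructor
    · intro hx
      obtain ⟨y, rfl⟩ := (hdπ x).mp hx
      refine ⟨n + g y, (Submodule.Quotient.eq W).mpr ⟨-y, ?_⟩⟩
      simp
    · rintro ⟨n', hn'⟩
      rw [← hn']
      simp [ι, p]
  obtain ⟨r, hr⟩ := hsplit _ ι p hι hp hιp
  refine ⟨r ∘ₗ W.mkQ ∘ₗ LinearMap.inl R P₀ N, LinearMap.ext fun y => ?_⟩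
  simpa [ι, hW] using LinearMap.congr_fun hr (g y)

end Extensions

theorem ExtensionsSplit.subsingleton_ext_one {k A : Type u} [Field k] [Ring A] [Algebra k A]
    {M N : ModuleCat.{u} A} (hsplit : ExtensionsSplit A M N) :
    Subsingleton (((Ext k (ModuleCat A) 1).obj (Opposite.op M)).obj N) := by
  let P := ProjectiveResolution.of M
  rw [← ModuleCat.isZero_iff_subsingleton]
  refine Limits.IsZero.of_iso ?_ (P.isoExt 1 N)
  rw [← HomologicalComplex.exactAt_iff_isZero_homology,
    HomologicalComplex.exactAt_iff' _ 0 1 2 (by simp) (by simp), ShortComplex.moduleCat_exact_iff]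
  intro g hg
  have hg' : P.complex.d 2 1 ≫ g = 0 := by
    rw [HomologicalComplex.shortComplexFunctor'_obj_g, ChainComplex.linearYonedaObj_d] at hg
    exact hg
  have hπ : Function.Surjective (P.π.f 0) := by
    rw [← ModuleCat.epi_iff_surjective]
    infer_instance
  have hdπ : Function.Exact (P.complex.d 1 0) (P.π.f 0) :=
    LinearMap.exact_iff.mpr P.exact₀.moduleCat_range_eq_ker.symm
  have hker : LinearMap.ker (P.complex.d 1 0).hom ≤ LinearMap.ker g.hom := by
    intro x hx
    obtain ⟨y, rfl⟩ := (ShortComplex.moduleCat_exact_iff _).mp (P.exact_succ 0) x hx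
    exact congr($hg' y)
  obtain ⟨h, hh⟩ := hsplit.exists_comp_eq hπ hdπ hker
  refine ⟨ModuleCat.ofHom h, ?_⟩
  rw [HomologicalComplex.shortComplexFunctor'_obj_f, ChainComplex.linearYonedaObj_d]
  exact ModuleCat.hom_ext hh

section Retractions

variable {R M N E : Type*} [Ring R] [AddCommGroup M] [Module R M]
  [AddCommGroup N] [Module R N] [AddCommGroup E] [Module R E]

theorem exists_retraction_of_notMem_span [IsSimpleModule R M] [IsSimpleModule R N]
    {ι : N →ₗ[R] E} {p : E →ₗ[R] M} (hι : Function.Injective ι) (hιp : Function.Exact ι p)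
    {x : E} (hx : p x ≠ 0) {n : N} (hn : ι n ∉ R ∙ x) :
    ∃ r : E →ₗ[R] N, r ∘ₗ ι = LinearMap.id := by
  have hcompl : IsCompl (LinearMap.range ι) (R ∙ x) := by
    constructor
    · rw [disjoint_iff, ← Submodule.map_comap_eq,
        (eq_bot_or_eq_top (Submodule.comap ι (R ∙ x))).resolve_right
          fun h => hn (Submodule.mem_comap.mp (h ▸ Submodule.mem_top)), Submodule.map_bot]
    · rw [codisjoint_iff, sup_comm, ← hιp.linearMap_ker_eq, ← Submodule.comap_map_eq,
        Submodule.map_span, Set.image_singleton, IsSimpleModule.span_singleton_eq_top R hx,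
        Submodule.comap_top]
  exact ⟨LinearMap.linearProjOfIsCompl _ ι hι hcompl,
    LinearMap.ext (LinearMap.linearProjOfIsCompl_apply_left _ ι hι hcompl)⟩

theorem Function.Exact.smul_eq_zero_of_smul_eq_zero {ι : N →ₗ[R] E} {p : E →ₗ[R] M}
    (hιp : Function.Exact ι p) {r t : R} (hr : r * t * r = r) (hM : ∀ m : M, r • m = 0)
    (hN : ∀ n : N, r • n = 0) (y : E) : r • y = 0 := by
  obtain ⟨n, hn⟩ := (hιp (r • y)).mp (by rw [map_smul, hM])
  rw [← hr, mul_smul, mul_smul, ← hn, ← map_smul, ← map_smul, hN, map_zero]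

end Retractions

section Averaging

variable {k R G V W : Type*} [Field k] [Ring R] [Algebra k R] [Group G] [Finite G]
  [AddCommGroup V] [Module R V] [Module k V] [IsScalarTower k R V]
  [AddCommGroup W] [Module R W] [Module k W] [IsScalarTower k R W]

-- `ρ` need not be unital: `(eSe)ˣ` acts on a `kS`-module with `e` acting as `ρ 1`.
theorem exists_equivariant_section (hG : (Nat.card G : k) ≠ 0) (ρ : G →ₙ* R)
    {p : V →ₗ[R] W} (hp : Function.Surjective p) :
    ∃ σ : W →ₗ[k] V, (∀ w, p (σ w) = ρ 1 • w) ∧ (∀ g w, σ (ρ g • w) = ρ g • σ w) ∧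
      ∀ w, ρ 1 • σ w = σ w := by
  have := Fintype.ofFinite G
  obtain ⟨σ₀, hσ₀⟩ := LinearMap.exists_rightInverse_of_surjective (p.restrictScalars k)
    (LinearMap.range_eq_top.mpr hp)
  have hpσ₀ (w : W) : p (σ₀ w) = w := LinearMap.congr_fun hσ₀ w
  let σ : W →ₗ[k] V := (Nat.card G : k)⁻¹ • ∑ g : G,
    DistribSMul.toLinearMap k V (ρ g) ∘ₗ σ₀ ∘ₗ DistribSMul.toLinearMap k W (ρ g⁻¹)
  have hσ (w : W) : σ w = (Nat.card G : k)⁻¹ • ∑ g : G, ρ g • σ₀ (ρ g⁻¹ • w) := by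
    simp [σ]
  refine ⟨σ, fun w => ?_, fun h w => ?_, fun w => ?_⟩
  · have hterm (g : G) : p (ρ g • σ₀ (ρ g⁻¹ • w)) = ρ 1 • w := by
      rw [p.map_smul, hpσ₀, smul_smul, ← map_mul, mul_inv_cancel]
    rw [hσ, LinearMap.map_smul_of_tower, map_sum, Finset.sum_congr rfl fun g _ => hterm g,
      Finset.sum_const, Finset.card_univ, ← Nat.card_eq_fintype_card,
      ← Nat.cast_smul_eq_nsmul k, smul_smul, inv_mul_cancel₀ hG, one_smul]
  · rw [hσ, hσ, smul_comm (ρ h)]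
    congr 1
    rw [Finset.smul_sum]
    refine Fintype.sum_equiv (Equiv.mulLeft h⁻¹) _ _ fun g => ?_
    simp only [Equiv.coe_mulLeft, smul_smul, ← map_mul, mul_inv_rev, inv_inv,
      mul_inv_cancel_left]
  · rw [hσ, smul_comm, Finset.smul_sum]
    simp only [smul_smul, ← map_mul, one_mul]

end Averaging

section PrincipalIdeals

variable {S : Type*} [Monoid S]

def principalIdeal (a : S) : Set S := {x | ∃ u v : S, x = u * a * v}

theorem mem_principalIdeal_self (a : S) : a ∈ principalIdeal a := ⟨1, 1, by simp⟩

theorem principalIdeal_subset_of_mem {a b : S} (h : a ∈ principalIdeal b) :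
    principalIdeal a ⊆ principalIdeal b := by
  rintro x ⟨u, v, rfl⟩
  obtain ⟨u', v', rfl⟩ := h
  exact ⟨u * u', v' * v, by simp only [mul_assoc]⟩

end PrincipalIdeals

namespace IsIdempotentElem

variable {S : Type*} {e : S}

instance [Semigroup S] (he : IsIdempotentElem e) : Monoid he.Corner where
  __ : Semigroup he.Corner := inferInstanceAs (Semigroup (Subsemigroup.corner e))
  one := ⟨e, e, by simp_rw [he.eq]⟩
  one_mul r := Subtype.ext ((Subsemigroup.mem_corner_iff he).mp r.2).1
  mul_one r := Subtype.ext ((Subsemigroup.mem_corner_iff he).mp r.2).2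

instance [Semigroup S] [Finite S] (he : IsIdempotentElem e) : Finite he.Corner :=
  inferInstanceAs (Finite (Subsemigroup.corner e))

theorem nat_card_units_corner [Semigroup S] (he : IsIdempotentElem e) :
    Nat.card he.Cornerˣ =
      Nat.card {x : S // e * x * e = x ∧ ∃ y : S, e * y * e = y ∧ x * y = e ∧ y * x = e} := by
  have hmem (c : he.Corner) : e * c.1 * e = c.1 := by
    obtain ⟨hl, hr⟩ := (Subsemigroup.mem_corner_iff he).mp c.2
    rw [hl, hr]
  refine Nat.card_congr (Equiv.ofBijective
    (fun u => ⟨(u : he.Corner).1, hmem u, (↑u⁻¹ : he.Corner).1, hmem _,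
      congrArg Subtype.val u.mul_inv, congrArg Subtype.val u.inv_mul⟩) ⟨?_, ?_⟩)
  · intro u v huv
    exact Units.ext (Subtype.ext (congrArg (fun x => x.1) huv))
  · rintro ⟨x, hx, y, hy, hxy, hyx⟩
    exact ⟨⟨⟨x, x, hx⟩, ⟨y, y, hy⟩, Subtype.ext hxy, Subtype.ext hyx⟩, rfl⟩

theorem isUnit_of_mem_principalIdeal [Monoid S] [Finite S] (he : IsIdempotentElem e)
    (u : he.Corner) (h : e ∈ principalIdeal u.1) : IsUnit u := by
  obtain ⟨a, b, hab⟩ := h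
  obtain ⟨hul, hur⟩ := (Subsemigroup.mem_corner_iff he).mp u.2
  let a' : he.Corner := ⟨e * a * e, a, rfl⟩
  let b' : he.Corner := ⟨e * b * e, b, rfl⟩
  have h1 : a' * (u * b') = 1 := Subtype.ext <| by
    change e * a * e * (u.1 * (e * b * e)) = e
    rw [show e * a * e * (u.1 * (e * b * e)) = e * (a * (e * u.1 * e) * b) * e by
      simp only [mul_assoc], hul, hur, ← hab, he.eq, he.eq]
  have h2 : u * (b' * a') = 1 := by rw [← mul_assoc, mul_eq_one_symm h1]
  exact ⟨⟨u, b' * a', h2, mul_eq_one_symm h2⟩, rfl⟩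

end IsIdempotentElem

section RightModules

variable {k : Type*} [CommRing k] {S : Type*} [Monoid S]

variable (k) in
noncomputable abbrev rightAct (s : S) : (MonoidAlgebra k S)ᵐᵒᵖ := op (MonoidAlgebra.single s 1)

theorem rightAct_mul_rightAct (s t : S) : rightAct k t * rightAct k s = rightAct k (s * t) := by
  rw [← op_mul, MonoidAlgebra.single_mul_single, one_mul]

variable {M N E : Type*} [AddCommGroup M] [Module (MonoidAlgebra k S)ᵐᵒᵖ M]
  [AddCommGroup N] [Module (MonoidAlgebra k S)ᵐᵒᵖ N]
  [AddCommGroup E] [Module (MonoidAlgebra k S)ᵐᵒᵖ E]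

theorem rightAct_smul_rightAct_smul (s t : S) (y : E) :
    rightAct k t • rightAct k s • y = rightAct k (s * t) • y := by
  rw [smul_smul, rightAct_mul_rightAct]

variable (k M) in
def HasApex (e : S) : Prop :=
  ∀ g : S, IsIdempotentElem g →
    ((∃ m : M, rightAct k g • m ≠ 0) ↔ principalIdeal e ⊆ principalIdeal g)

theorem HasApex.rightAct_smul_eq_zero {e s t : S} (hM : HasApex k M e) (hst : s * t * s = s)
    (hes : ¬ principalIdeal e ⊆ principalIdeal s) (m : M) : rightAct k s • m = 0 := by
  by_contra hm
  have hts : IsIdempotentElem (t * s) := by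
    change t * s * (t * s) = t * s
    rw [show t * s * (t * s) = t * (s * t * s) by simp only [mul_assoc], hst]
  refine hes (((hM _ hts).mp ⟨rightAct k s • m, ?_⟩).trans
    (principalIdeal_subset_of_mem ⟨t, 1, by simp⟩))
  rwa [rightAct_smul_rightAct_smul, ← mul_assoc, hst]

theorem rightAct_smul_eq_zero_of_exact {e f s t : S} (hM : HasApex k M e) (hN : HasApex k N f)
    {ι : N →ₗ[(MonoidAlgebra k S)ᵐᵒᵖ] E} {p : E →ₗ[(MonoidAlgebra k S)ᵐᵒᵖ] M}
    (hιp : Function.Exact ι p) (hst : s * t * s = s)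
    (hes : ¬ principalIdeal e ⊆ principalIdeal s) (hfs : ¬ principalIdeal f ⊆ principalIdeal s)
    (y : E) : rightAct k s • y = 0 :=
  hιp.smul_eq_zero_of_smul_eq_zero (t := rightAct k t)
    (by rw [rightAct_mul_rightAct, rightAct_mul_rightAct, ← mul_assoc, hst])
    (hM.rightAct_smul_eq_zero hst hes) (hN.rightAct_smul_eq_zero hst hfs) y

theorem rightAct_smul_smul_mem [Module k E] [IsScalarTower k (MonoidAlgebra k S)ᵐᵒᵖ E]
    {W : Submodule k E} {x : E} {g : S} (hx : ∀ s, rightAct k (s * g) • x ∈ W)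
    (a : (MonoidAlgebra k S)ᵐᵒᵖ) : rightAct k g • a • x ∈ W := by
  obtain ⟨c, rfl⟩ := MulOpposite.op_surjective a
  rw [smul_smul, ← op_mul]
  induction c using MonoidAlgebra.induction_on with
  | of s => rw [MonoidAlgebra.of_apply, MonoidAlgebra.single_mul_single, one_mul]; exact hx s
  | add c c' hc hc' => rw [add_mul, MulOpposite.op_add, add_smul]; exact W.add_mem hc hc'
  | smul r c hc => rw [smul_mul_assoc, MulOpposite.op_smul, smul_assoc]; exact W.smul_mem r hc

theorem exists_retraction_of_forall_rightAct_smul_mem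
    [IsSimpleModule (MonoidAlgebra k S)ᵐᵒᵖ M] [IsSimpleModule (MonoidAlgebra k S)ᵐᵒᵖ N]
    [Module k E] [IsScalarTower k (MonoidAlgebra k S)ᵐᵒᵖ E]
    {ι : N →ₗ[(MonoidAlgebra k S)ᵐᵒᵖ] E} {p : E →ₗ[(MonoidAlgebra k S)ᵐᵒᵖ] M}
    (hι : Function.Injective ι) (hιp : Function.Exact ι p) {x : E} (hx : p x ≠ 0) {g : S}
    {n : N} (hn : rightAct k g • n ≠ 0) {W : Submodule k E} (hW : ∀ y ∈ W, p y = 0 → y = 0)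
    (hxW : ∀ s, rightAct k (s * g) • x ∈ W) :
    ∃ r : E →ₗ[(MonoidAlgebra k S)ᵐᵒᵖ] N, r ∘ₗ ι = LinearMap.id := by
  refine exists_retraction_of_notMem_span hι hιp hx (n := n) fun hmem => hn (hι ?_)
  obtain ⟨a, ha⟩ := Submodule.mem_span_singleton.mp hmem
  have hmemW : ι (rightAct k g • n) ∈ W := by
    rw [map_smul, ← ha]
    exact rightAct_smul_smul_mem hxW a
  rw [map_zero]
  exact hW _ hmemW (hιp.apply_apply_eq_zero _)

end RightModules

section Apexes

variable {S : Type*} [Monoid S] {M N : Type v} [AddCommGroup M] [AddCommGroup N]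

theorem extensionsSplit_of_incomparable_apexes {k : Type*} [CommRing k]
    [Module (MonoidAlgebra k S)ᵐᵒᵖ M] [Module (MonoidAlgebra k S)ᵐᵒᵖ N]
    [IsSimpleModule (MonoidAlgebra k S)ᵐᵒᵖ M] [IsSimpleModule (MonoidAlgebra k S)ᵐᵒᵖ N]
    (hreg : ∀ s : S, ∃ t : S, s * t * s = s) {e f : S} (he : IsIdempotentElem e)
    (hf : IsIdempotentElem f) (hM : HasApex k M e) (hN : HasApex k N f)
    (hef : ¬ principalIdeal e ⊆ principalIdeal f) (hfe : ¬ principalIdeal f ⊆ principalIdeal e) :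
    ExtensionsSplit (MonoidAlgebra k S)ᵐᵒᵖ M N := by
  intro E _ _ ι p hι hp hιp
  let := Module.restrictScalars k (MonoidAlgebra k S)ᵐᵒᵖ E
  have := IsScalarTower.restrictScalars k (MonoidAlgebra k S)ᵐᵒᵖ E
  obtain ⟨m, hm⟩ := (hM e he).mpr subset_rfl
  obtain ⟨x, rfl⟩ := hp m
  obtain ⟨n, hn⟩ := (hN f hf).mpr subset_rfl
  refine exists_retraction_of_forall_rightAct_smul_mem hι hιp (x := rightAct k e • x)
    (by rwa [map_smul]) hn (W := ⊥) (fun y hy _ => (Submodule.mem_bot k).mp hy) fun s => ?_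
  obtain ⟨t, ht⟩ := hreg (e * s * f)
  rw [rightAct_smul_rightAct_smul, Submodule.mem_bot, ← mul_assoc]
  exact rightAct_smul_eq_zero_of_exact hM hN hιp ht
    (fun h => hef (h.trans (principalIdeal_subset_of_mem ⟨e * s, 1, by simp⟩)))
    (fun h => hfe (h.trans (principalIdeal_subset_of_mem ⟨1, s * f, by simp [mul_assoc]⟩))) x

theorem extensionsSplit_of_same_apex {k : Type*} [Field k] [Finite S]
    [Module (MonoidAlgebra k S)ᵐᵒᵖ M] [Module (MonoidAlgebra k S)ᵐᵒᵖ N]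
    [IsSimpleModule (MonoidAlgebra k S)ᵐᵒᵖ M] [IsSimpleModule (MonoidAlgebra k S)ᵐᵒᵖ N]
    (hreg : ∀ s : S, ∃ t : S, s * t * s = s) {e : S} (he : IsIdempotentElem e)
    (hG : (Nat.card he.Cornerˣ : k) ≠ 0) (hM : HasApex k M e) (hN : HasApex k N e) :
    ExtensionsSplit (MonoidAlgebra k S)ᵐᵒᵖ M N := by
  intro E _ _ ι p hι hp hιp
  let := Module.restrictScalars k (MonoidAlgebra k S)ᵐᵒᵖ E
  have := IsScalarTower.restrictScalars k (MonoidAlgebra k S)ᵐᵒᵖ E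
  let := Module.restrictScalars k (MonoidAlgebra k S)ᵐᵒᵖ M
  have := IsScalarTower.restrictScalars k (MonoidAlgebra k S)ᵐᵒᵖ M
  have : Finite he.Cornerˣᵐᵒᵖ := Finite.of_equiv _ MulOpposite.opEquiv
  let ρ : he.Cornerˣᵐᵒᵖ →ₙ* (MonoidAlgebra k S)ᵐᵒᵖ :=
    { toFun g := rightAct k (g.unop : he.Corner).1
      map_mul' g h := (rightAct_mul_rightAct _ _).symm }
  obtain ⟨σ, hpσ, hσρ, hρσ⟩ := exists_equivariant_section
    (by rwa [Nat.card_congr MulOpposite.opEquiv.symm]) ρ hp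
  obtain ⟨m, hm⟩ := (hM e he).mpr subset_rfl
  obtain ⟨n, hn⟩ := (hN e he).mpr subset_rfl
  refine exists_retraction_of_forall_rightAct_smul_mem hι hιp (x := σ m) (by rwa [hpσ]) hn
    (W := LinearMap.range σ) ?_ fun s => ?_
  · rintro _ ⟨m', rfl⟩ hm'
    rw [hpσ] at hm'
    rw [← hρσ, ← hσρ, hm', map_zero]
  · rw [← hρσ, show ρ 1 = rightAct k e from rfl, rightAct_smul_rightAct_smul]
    let u : he.Corner := ⟨e * (s * e), s, by simp only [mul_assoc]⟩
    by_cases hu : IsUnit u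
    · obtain ⟨g, hg⟩ := hu
      refine ⟨ρ (op g) • m, ?_⟩
      rw [hσρ, show ρ (op g) = rightAct k u.1 from
        congrArg (fun c : he.Corner => rightAct k c.1) hg]
    · obtain ⟨t, ht⟩ := hreg (e * (s * e))
      have hJ : ¬ principalIdeal e ⊆ principalIdeal (e * (s * e)) := fun h =>
        hu (he.isUnit_of_mem_principalIdeal u (h (mem_principalIdeal_self e)))
      rw [rightAct_smul_eq_zero_of_exact hM hN hιp ht hJ hJ]
      exact zero_mem _

end Apexes

/-- let `S` be a finite regular monoid and `k` a field whose characteristic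
divides the order of no maximal subgroup of `S` (the maximal subgroup at an idempotent `g`
being the group of units of `gSg`).  If `M, N` are simple right `kS`-modules with apexes
at idempotents `e, f` and `Ext¹_{kS}(M, N) ≠ 0`, then `SeS ⊊ SfS` or `SfS ⊊ SeS`. -/
theorem stmt10 (k : Type) [Field k] (S : Type) [Monoid S] [Finite S]
    (hreg : ∀ s : S, ∃ t : S, s * t * s = s)
    (hchar : ∀ g : S, g * g = g →
      ¬ (ringChar k ∣ Nat.card {x : S // (g * x * g = x) ∧
          ∃ y : S, (g * y * g = y) ∧ x * y = g ∧ y * x = g}))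
    (e f : S) (he : e * e = e) (hf : f * f = f)
    (M N : ModuleCat (MonoidAlgebra k S)ᵐᵒᵖ)
    (hMsimple : IsSimpleModule (MonoidAlgebra k S)ᵐᵒᵖ M)
    (hNsimple : IsSimpleModule (MonoidAlgebra k S)ᵐᵒᵖ N)
    (hMapex : ∀ g : S, g * g = g →
      ((∃ m : M, op (MonoidAlgebra.single g (1 : k)) • m ≠ 0) ↔
        {x : S | ∃ u v : S, x = u * e * v} ⊆ {x : S | ∃ u v : S, x = u * g * v}))
    (hNapex : ∀ g : S, g * g = g →
      ((∃ m : N, op (MonoidAlgebra.single g (1 : k)) • m ≠ 0) ↔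
        {x : S | ∃ u v : S, x = u * f * v} ⊆ {x : S | ∃ u v : S, x = u * g * v}))
    (hext : ¬ Subsingleton
      (((Ext k (ModuleCat (MonoidAlgebra k S)ᵐᵒᵖ) 1).obj (Opposite.op M)).obj N)) :
    {x : S | ∃ u v : S, x = u * e * v} ⊂ {x : S | ∃ u v : S, x = u * f * v} ∨
    {x : S | ∃ u v : S, x = u * f * v} ⊂ {x : S | ∃ u v : S, x = u * e * v} := by
  by_contra hcomparable
  obtain ⟨hnef, hnfe⟩ := not_or.mp hcomparable
  refine hext (ExtensionsSplit.subsingleton_ext_one ?_)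
  by_cases hef : principalIdeal e ⊆ principalIdeal f <;>
    by_cases hfe : principalIdeal f ⊆ principalIdeal e
  · have he' : IsIdempotentElem e := he
    have hG : (Nat.card he'.Cornerˣ : k) ≠ 0 := fun h0 =>
      hchar e he (he'.nat_card_units_corner ▸ (ringChar.spec k _).mp h0)
    exact extensionsSplit_of_same_apex hreg he' hG hMapex
      fun g hg => (hNapex g hg).trans (by rw [hef.antisymm hfe]; rfl)
  · exact absurd (ssubset_of_subset_not_subset hef hfe) hnef
  · exact absurd (ssubset_of_subset_not_subset hfe hef) hnfe
  · exact extensionsSplit_of_incomparable_apexes hreg he hf hMapex hNapex hef hfe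
end

section
/- Let S be a right regular band of groups and a, b ∈ S. Then aS ∩ bS = abS, where xS = {x·s : s ∈ S}. Consequently, the set of principal right ideals of S forms a meet semilattice under intersection, and the map a ↦ aS is a surjective semigroup homomorphism from S onto this semilattice. -/
/-!
Every element `x` of a finite semigroup has an idempotent positive power `e`; in a right
regular band of groups it satisfies `e * x = x * e = x`, and `e ∈ xS` because `e = e * e` is a
power of `x` of length at least two. The second axiom gives `t * e = e * t * e ∈ yS` whenever
`e ∈ yS`, so `Se ⊆ yS`. Hence `ab = (ae)b ∈ bS` for the idempotent `e` of `b`, and for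
`x = a s ∈ bS` with idempotent `e ∈ xS ⊆ bS` we get `x = a (s e) ∈ a(bS)`.
-/

/-- `spow s n` is the (n+1)-st power `s^(n+1)` of `s`, so that `spow s n` for `n : ℕ`
ranges over all positive powers of `s`. -/
def spow {S : Type*} [Semigroup S] (s : S) : ℕ → S
  | 0 => s
  | n + 1 => spow s n * s

section Semigroup

variable {S : Type*} [Semigroup S]

theorem spow_mul_spow (s : S) (m n : ℕ) : spow s m * spow s n = spow s (m + n + 1) := by
  induction n with
  | zero => rfl
  | succ n ih => rw [spow, ← mul_assoc, ih]; rfl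

theorem mul_spow (s : S) (n : ℕ) : s * spow s n = spow s (n + 1) :=
  (spow_mul_spow s 0 n).trans (by rw [Nat.zero_add])

theorem spow_mul (s : S) (n : ℕ) : spow s n * s = spow s (n + 1) := rfl

/-- Ellis' lemma, applied to `S` with the discrete topology. -/
theorem exists_isIdempotentElem_spow [Finite S] (s : S) : ∃ n, IsIdempotentElem (spow s n) := by
  let _ : TopologicalSpace S := ⊥
  have : DiscreteTopology S := ⟨rfl⟩
  obtain ⟨_, ⟨n, rfl⟩, hn⟩ := exists_idempotent_in_compact_subsemigroup
    (fun _ => continuous_of_discreteTopology) (Set.range (spow s)) (Set.range_nonempty _)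
    (Set.toFinite _).isCompact
    (by rintro _ ⟨m, rfl⟩ _ ⟨n, rfl⟩; exact ⟨m + n + 1, (spow_mul_spow s m n).symm⟩)
  exact ⟨n, hn⟩

def principalRightIdeal (a : S) : Set S := {x | ∃ s, x = a * s}

theorem mul_mem_principalRightIdeal_self (a s : S) : a * s ∈ principalRightIdeal a := ⟨s, rfl⟩

theorem mul_mem_principalRightIdeal {a x : S} (hx : x ∈ principalRightIdeal a) (s : S) :
    x * s ∈ principalRightIdeal a := by
  obtain ⟨t, rfl⟩ := hx
  exact ⟨t * s, mul_assoc a t s⟩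

theorem principalRightIdeal_subset_of_mem {a x : S} (hx : x ∈ principalRightIdeal a) :
    principalRightIdeal x ⊆ principalRightIdeal a := by
  rintro _ ⟨s, rfl⟩
  exact mul_mem_principalRightIdeal hx s

theorem principalRightIdeal_mul_subset_left (a b : S) :
    principalRightIdeal (a * b) ⊆ principalRightIdeal a :=
  principalRightIdeal_subset_of_mem (mul_mem_principalRightIdeal_self a b)

theorem exists_isIdempotentElem_mem_principalRightIdeal [Finite S]
    (hpow : ∀ s : S, ∀ n : ℕ, IsIdempotentElem (spow s n) → spow s n * s = s) (x : S) :
    ∃ e, IsIdempotentElem e ∧ e ∈ principalRightIdeal x ∧ e * x = x ∧ x * e = x := by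
  obtain ⟨n, hn⟩ := exists_isIdempotentElem_spow x
  have hleft : spow x n * x = x := hpow x n hn
  refine ⟨spow x n, hn, ⟨spow x (n + n), ?_⟩, hleft, ?_⟩
  · rw [mul_spow, ← spow_mul_spow, hn.eq]
  · rw [mul_spow, ← spow_mul, hleft]

theorem mul_mem_principalRightIdeal_of_isIdempotentElem
    (hright : ∀ e : S, IsIdempotentElem e → ∀ t : S, e * t * e = t * e)
    {e y : S} (he : IsIdempotentElem e) (hey : e ∈ principalRightIdeal y) (t : S) :
    t * e ∈ principalRightIdeal y := by
  rw [← hright e he t, mul_assoc]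
  exact mul_mem_principalRightIdeal hey _

theorem principalRightIdeal_mul_subset_right [Finite S]
    (hpow : ∀ s : S, ∀ n : ℕ, IsIdempotentElem (spow s n) → spow s n * s = s)
    (hright : ∀ e : S, IsIdempotentElem e → ∀ t : S, e * t * e = t * e) (a b : S) :
    principalRightIdeal (a * b) ⊆ principalRightIdeal b := by
  obtain ⟨e, he, heb, hb, -⟩ := exists_isIdempotentElem_mem_principalRightIdeal hpow b
  refine principalRightIdeal_subset_of_mem ?_
  rw [show a * b = a * e * b by rw [mul_assoc, hb]]
  exact mul_mem_principalRightIdeal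
    (mul_mem_principalRightIdeal_of_isIdempotentElem hright he heb a) b

theorem inter_principalRightIdeal_subset [Finite S]
    (hpow : ∀ s : S, ∀ n : ℕ, IsIdempotentElem (spow s n) → spow s n * s = s)
    (hright : ∀ e : S, IsIdempotentElem e → ∀ t : S, e * t * e = t * e) (a b : S) :
    principalRightIdeal a ∩ principalRightIdeal b ⊆ principalRightIdeal (a * b) := by
  rintro x ⟨⟨s, rfl⟩, hxb⟩
  obtain ⟨e, he, hex, -, hxe⟩ := exists_isIdempotentElem_mem_principalRightIdeal hpow (a * s)
  obtain ⟨w, hw⟩ := mul_mem_principalRightIdeal_of_isIdempotentElem hright he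
    (principalRightIdeal_subset_of_mem hxb hex) s
  rw [← hxe, mul_assoc, hw, ← mul_assoc]
  exact mul_mem_principalRightIdeal_self _ _

theorem principalRightIdeal_mul [Finite S]
    (hpow : ∀ s : S, ∀ n : ℕ, IsIdempotentElem (spow s n) → spow s n * s = s)
    (hright : ∀ e : S, IsIdempotentElem e → ∀ t : S, e * t * e = t * e) (a b : S) :
    principalRightIdeal (a * b) = principalRightIdeal a ∩ principalRightIdeal b :=
  subset_antisymm
    (Set.subset_inter (principalRightIdeal_mul_subset_left a b)
      (principalRightIdeal_mul_subset_right hpow hright a b))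
    (inter_principalRightIdeal_subset hpow hright a b)

end Semigroup

/-- in a right regular band of groups, `aS ∩ bS = abS`.  Consequently the
set of principal right ideals is closed under intersection (hence is a meet semilattice
under intersection) and `a ↦ aS` is a surjective homomorphism onto it (surjectivity being
definitional, the homomorphism property is `(ab)S = aS ∩ bS`). -/
theorem stmt14 (S : Type*) [Semigroup S] [Finite S]
    (h1 : ∀ s : S, ∀ n : ℕ, spow s n * spow s n = spow s n → spow s n * s = s)
    (h2 : ∀ e : S, e * e = e → ∀ t : S, e * t * e = t * e) :
    (∀ a b : S,
      {x : S | ∃ s : S, x = a * s} ∩ {x : S | ∃ s : S, x = b * s}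
        = {x : S | ∃ s : S, x = (a * b) * s}) ∧
    (∀ X ∈ {T : Set S | ∃ c : S, T = {x : S | ∃ s : S, x = c * s}},
      ∀ Y ∈ {T : Set S | ∃ c : S, T = {x : S | ∃ s : S, x = c * s}},
        X ∩ Y ∈ {T : Set S | ∃ c : S, T = {x : S | ∃ s : S, x = c * s}}) ∧
    (∀ a b : S, {x : S | ∃ s : S, x = (a * b) * s}
      = {x : S | ∃ s : S, x = a * s} ∩ {x : S | ∃ s : S, x = b * s}) := by
  have hmul := principalRightIdeal_mul h1 h2
  refine ⟨fun a b => (hmul a b).symm, ?_, hmul⟩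
  rintro _ ⟨c, rfl⟩ _ ⟨d, rfl⟩
  exact ⟨c * d, (hmul c d).symm⟩
end
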